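/- Let m be a real 2×2 matrix with det m = 1 and Tr m = ±2, and suppose m ≠ ±I (eigenvalue ±1 with geometric multiplicity one). Then there exists a rotation matrix o (oᵗo = I, det o = +1) and K ∈ ℝ, K ≠ 0, such that m = oᵗ [[±1, K],[0, ±1]] o, and moreover K = Tr(jm) where j = [[0,−1],[1,0]]. -/
import Mathlib


open Matrix

private lemma aux_transpose (a b c d : ℝ) : (!![a, b; c, d])ᵀ = !![a, c; b, d] := by
  ext i j; fin_cases i <;> fin_cases j <;> rfl

private lemma aux_orth (A B ε N : ℝ) (hN2 : N ^ 2 = B ^ 2 + (A - ε) ^ 2) (hN0 : N ≠ 0) :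
    !![B / N, (A - ε) / N; -(A - ε) / N, B / N] *
      !![B / N, -(A - ε) / N; (A - ε) / N, B / N] = 1 := by
  ext i j
  fin_cases i <;> fin_cases j <;>
    simp [Matrix.mul_apply, Fin.sum_univ_two, Matrix.one_apply] <;>
    field_simp <;>
    first
      | linear_combination -hN2
      | linear_combination hN2
      | ring

private lemma aux_det (A B ε N : ℝ) (hN2 : N ^ 2 = B ^ 2 + (A - ε) ^ 2) (hN0 : N ≠ 0) :
    (!![B / N, -(A - ε) / N; (A - ε) / N, B / N]).det = 1 := by
  rw [Matrix.det_fin_two_of]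
  field_simp
  linear_combination -hN2

private lemma aux_conj (A B C ε N : ℝ)
    (hp : (A - ε) ^ 2 + B * C = 0)
    (hN2 : N ^ 2 = B ^ 2 + (A - ε) ^ 2) (hN0 : N ≠ 0) :
    !![A, B; C, 2 * ε - A] =
      !![B / N, (A - ε) / N; -(A - ε) / N, B / N] *
        (!![ε, B - C; 0, ε]) * !![B / N, -(A - ε) / N; (A - ε) / N, B / N] := by
  ext i j
  fin_cases i <;> fin_cases j <;>
    simp [Matrix.mul_apply, Fin.sum_univ_two] <;>
    field_simp
  · linear_combination A * hN2 + (A - ε) * hp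
  · linear_combination B * hN2 + B * hp
  · linear_combination C * hN2 + B * hp
  · linear_combination (2 * ε - A) * hN2 - (A - ε) * hp

private lemma aux_orth2 : (!![(0 : ℝ), -1; 1, 0]) * !![0, 1; -1, 0] = 1 := by
  ext i j
  fin_cases i <;> fin_cases j <;>
    simp [Matrix.mul_apply, Fin.sum_univ_two, Matrix.one_apply]

private lemma aux_conj2 (C ε : ℝ) :
    !![ε, 0; C, 2 * ε - ε] =
      !![(0 : ℝ), -1; 1, 0] * (!![ε, (0 : ℝ) - C; 0, ε]) * !![0, 1; -1, 0] := by
  ext i j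
  fin_cases i <;> fin_cases j <;>
    simp [Matrix.mul_apply, Fin.sum_univ_two] <;> ring

/-- Jordan normal form via SO(2) conjugation: a unimodular 2×2 matrix with
trace ±2 that is not ±I is SO(2)-conjugate to a Jordan block with off-diagonal
entry K = Tr(jm) ≠ 0. -/
theorem jordan_form_via_rotation (m : Matrix (Fin 2) (Fin 2) ℝ) (ε : ℝ)
    (hε : ε = 1 ∨ ε = -1)
    (hdet : m.det = 1) (htr : Matrix.trace m = 2 * ε)
    (hm : m ≠ ε • (1 : Matrix (Fin 2) (Fin 2) ℝ)) :
    ∃ (o : Matrix (Fin 2) (Fin 2) ℝ) (K : ℝ),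
      oᵀ * o = 1 ∧ o.det = 1 ∧ K ≠ 0 ∧
      m = oᵀ * (!![ε, K; 0, ε] : Matrix (Fin 2) (Fin 2) ℝ) * o ∧
      K = Matrix.trace ((!![0, -1; 1, 0] : Matrix (Fin 2) (Fin 2) ℝ) * m) := by
  have hε2 : ε ^ 2 = 1 := by rcases hε with h | h <;> rw [h] <;> norm_num
  obtain ⟨A, B, C, D, rfl⟩ : ∃ A B C D, m = !![A, B; C, D] :=
    ⟨m 0 0, m 0 1, m 1 0, m 1 1, by ext i j; fin_cases i <;> fin_cases j <;> rfl⟩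
  rw [Matrix.det_fin_two_of] at hdet
  rw [Matrix.trace_fin_two_of] at htr
  have hD : D = 2 * ε - A := by linarith
  subst hD
  have hp : (A - ε) ^ 2 + B * C = 0 := by nlinarith [hdet, hε2]
  have hm' : ¬(A - ε = 0 ∧ B = 0 ∧ C = 0) := by
    rintro ⟨h1, h2, h3⟩
    apply hm
    have hA : A = ε := by linarith
    ext i j
    fin_cases i <;> fin_cases j <;>
      simp [hA, h2, h3, Matrix.one_apply] <;> ring
  have hK : B - C ≠ 0 := by
    intro h
    have hp2 : (A - ε) ^ 2 + B * B = 0 := by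
      rw [show C = B by linarith] at hp; exact hp
    have hB0 : B = 0 := by nlinarith [sq_nonneg (A - ε), mul_self_nonneg B]
    have hA0 : A - ε = 0 := by nlinarith [mul_self_nonneg B, sq_nonneg (A - ε)]
    exact hm' ⟨hA0, hB0, by linarith⟩
  have htrj : B - C =
      Matrix.trace ((!![0, -1; 1, 0] : Matrix (Fin 2) (Fin 2) ℝ) * !![A, B; C, 2 * ε - A]) := by
    rw [Matrix.trace_fin_two]
    simp [Matrix.mul_apply, Fin.sum_univ_two]
    ring
  by_cases hBp : B = 0 ∧ A - ε = 0
  · obtain ⟨hB, hp0⟩ := hBp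
    have hA : A = ε := by linarith
    refine ⟨!![0, 1; -1, 0], B - C, ?_, ?_, hK, ?_, htrj⟩
    · rw [show (!![(0:ℝ), 1; -1, 0])ᵀ = !![0, -1; 1, 0] from aux_transpose 0 1 (-1) 0]
      exact aux_orth2
    · simp [Matrix.det_fin_two_of]
    · rw [show (!![(0:ℝ), 1; -1, 0])ᵀ = !![0, -1; 1, 0] from aux_transpose 0 1 (-1) 0]
      rw [hA, hB]
      exact aux_conj2 C ε
  · have hN2pos : 0 < B ^ 2 + (A - ε) ^ 2 := by
      rcases not_and_or.1 hBp with h | h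
      · positivity
      · positivity
    obtain ⟨N, hN2, hNpos⟩ : ∃ N : ℝ, N ^ 2 = B ^ 2 + (A - ε) ^ 2 ∧ 0 < N :=
      ⟨Real.sqrt (B ^ 2 + (A - ε) ^ 2), Real.sq_sqrt hN2pos.le,
        Real.sqrt_pos.mpr hN2pos⟩
    have hN0 : N ≠ 0 := ne_of_gt hNpos
    have hoT : (!![B / N, -(A - ε) / N; (A - ε) / N, B / N])ᵀ
        = !![B / N, (A - ε) / N; -(A - ε) / N, B / N] :=
      aux_transpose _ _ _ _
    refine ⟨!![B / N, -(A - ε) / N; (A - ε) / N, B / N], B - C, ?_, ?_, hK, ?_, htrj⟩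
    · rw [hoT]; exact aux_orth A B ε N hN2 hN0
    · exact aux_det A B ε N hN2 hN0
    · rw [hoT]; exact aux_conj A B C ε N hp hN2 hN0
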